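/- arXiv:2211.13802 — 2 statements merged into one kernel-verified Lean document; each statement's English description precedes it below -/
import Mathlib

section
/- Let n, B, λ be fixed positive integers with λ < n. As W → ∞, the difference between the M-SGC load (λ+1)(W-1+B)/(n(B+(W-1)(λ+1))) and the lower bound (W-1+B)/(n(W-1)+B(n-λ)) is O(1/W); more precisely, the difference is at most C/W for some constant C depending only on n, B, λ and all W > B. -/
/-!
Over a common denominator the terms linear in `W` cancel, and the gap becomes
`B λ (n - λ - 1) (W - 1 + B) / (n (B + (W - 1)(λ + 1)) (n (W - 1) + B (n - λ)))`:
linear over quadratic in `W`. For `W > B` this is at most `2 B λ (n - λ - 1) / (n² (W - 1))`,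
and AM-GM gives `4 λ (n - 1 - λ) ≤ (n - 1)² ≤ n²`, so the gap is at most `B / W`.
-/

noncomputable section

namespace MSGC

def load (n B l W : ℝ) : ℝ :=
  (l + 1) * (W - 1 + B) / (n * (B + (W - 1) * (l + 1)))

def loadLowerBound (n B l W : ℝ) : ℝ :=
  (W - 1 + B) / (n * (W - 1) + B * (n - l))

theorem load_sub_loadLowerBound {n B l W : ℝ}
    (h₁ : n * (B + (W - 1) * (l + 1)) ≠ 0) (h₂ : n * (W - 1) + B * (n - l) ≠ 0) :
    load n B l W - loadLowerBound n B l W =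
      B * (l * (n - 1 - l)) * (W - 1 + B) /
        (n * (B + (W - 1) * (l + 1)) * (n * (W - 1) + B * (n - l))) := by
  rw [load, loadLowerBound, div_sub_div _ _ h₁ h₂]
  ring_nf

theorem load_sub_loadLowerBound_le {n B l W : ℝ} (hl : 0 ≤ l) (hln : l + 1 ≤ n)
    (hB : 1 ≤ B) (hBW : B ≤ W - 1) :
    load n B l W - loadLowerBound n B l W ≤ B / W := by
  set x := W - 1 with hx
  have hxpos : 0 < x := by linarith
  have hn : 0 < n := by linarith
  have hP : 0 ≤ l * (n - 1 - l) := mul_nonneg hl (by linarith)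
  have hP_le : l * (n - 1 - l) ≤ n ^ 2 / 4 := by
    nlinarith [four_mul_le_sq_add l (n - 1 - l)]
  have hD₁ : n * x ≤ n * (B + x * (l + 1)) := by gcongr; nlinarith
  have hD₂ : n * x ≤ n * x + B * (n - l) := by nlinarith
  calc load n B l W - loadLowerBound n B l W
      = B * (l * (n - 1 - l)) * (x + B) / (n * (B + x * (l + 1)) * (n * x + B * (n - l))) :=
        load_sub_loadLowerBound (by positivity) (by nlinarith)
    _ ≤ B * (l * (n - 1 - l)) * (2 * x) / ((n * x) * (n * x)) := by gcongr; linarith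
    _ = 2 * B * (l * (n - 1 - l)) / (n ^ 2 * x) := by field_simp
    _ ≤ 2 * B * (n ^ 2 / 4) / (n ^ 2 * x) := by gcongr
    _ = B / (2 * x) := by field_simp; ring
    _ ≤ B / W := by gcongr <;> linarith

end MSGC

end

theorem msgc_gap_O_one_div_W_general (n B lam : ℕ)
    (hB : 0 < B) (hln : lam < n) :
    ∃ C : ℝ, 0 < C ∧ ∀ W : ℕ, B < W →
      ((lam : ℝ) + 1) * ((W : ℝ) - 1 + B) /
          ((n : ℝ) * ((B : ℝ) + ((W : ℝ) - 1) * ((lam : ℝ) + 1)))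
        - ((W : ℝ) - 1 + B) / ((n : ℝ) * ((W : ℝ) - 1) + (B : ℝ) * ((n : ℝ) - lam))
        ≤ C / W := by
  refine ⟨B, by positivity, fun W hW => ?_⟩
  have hBW : (B : ℝ) + 1 ≤ W := by exact_mod_cast hW
  have hln' : (lam : ℝ) + 1 ≤ n := by exact_mod_cast hln
  exact MSGC.load_sub_loadLowerBound_le (Nat.cast_nonneg lam) hln' (by exact_mod_cast hB)
    (by linarith)

/-- The gap between the M-SGC load and the lower bound is `O(1/W)`. -/
theorem msgc_gap_O_one_div_W (n B lam : ℕ)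
    (hn : 0 < n) (hB : 0 < B) (hlam : 0 < lam) (hln : lam < n) :
    ∃ C : ℝ, 0 < C ∧ ∀ W : ℕ, B < W →
      ((lam : ℝ) + 1) * ((W : ℝ) - 1 + B) /
          ((n : ℝ) * ((B : ℝ) + ((W : ℝ) - 1) * ((lam : ℝ) + 1)))
        - ((W : ℝ) - 1 + B) / ((n : ℝ) * ((W : ℝ) - 1) + (B : ℝ) * ((n : ℝ) - lam))
        ≤ C / W :=
  msgc_gap_O_one_div_W_general n B lam hB hln
end

section
/- Let B, W be positive integers with B < W, and suppose the binary straggler sequence S of a worker conforms to the (B,W,λ)-bursty model's temporal constraint. Fix round t. If the worker straggles in x' rounds within [t, t+W-2] for some x' ∈ [1, B], then the worker straggles in at most B - x' rounds within [t+W-1, t+W-2+B]. -/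
/-!
Within a window of `W` rounds every straggler lies fewer than `B` rounds after the first one, and
two rounds `W - 1` apart lie in a common window, so they cannot both be stragglers. Hence, if `a` is
the first straggler of an interval of length `W - 1 + B`, sending a later straggler `u` to `u` when
`u < a + W` and to `u - (W - 1)` otherwise is an injection into `[a, a + B - 1]`: the interval holds
at most `B` stragglers, and the `x'` of them in its first `W - 1` rounds leave room for `B - x'`.
-/

open Finset

def IsBursty (B W : ℕ) (S : ℤ → Bool) : Prop :=
  ∀ j u l : ℤ, u ∈ Set.Icc j (j + W - 1) → S u = true →
    l ∈ Set.Icc (u + B) (j + W - 1) → S l = false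

namespace IsBursty

variable {B W : ℕ} {S : ℤ → Bool}

theorem lt_add_of_le (hS : IsBursty B W S) {u l : ℤ} (hu : S u = true) (hl : S l = true)
    (hul : u ≤ l) (hlu : l ≤ u + W - 1) : l < u + B := by
  by_contra! h
  have := hS u u l ⟨le_rfl, by omega⟩ hu ⟨h, hlu⟩
  simp [hl] at this

theorem ne_add_sub_one (hS : IsBursty B W S) (hBW : B < W) {p q : ℤ} (hp : S p = true)
    (hq : S q = true) : q ≠ p + W - 1 := by
  rintro rfl
  have := hS.lt_add_of_le hp hq (by omega) le_rfl
  omega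

theorem card_filter_Icc_le (hS : IsBursty B W S) (hBW : B < W) (t : ℤ) :
    #{u ∈ Icc t (t + W - 2 + B) | S u = true} ≤ B := by
  set T := {u ∈ Icc t (t + W - 2 + B) | S u = true}
  obtain hT | hT := T.eq_empty_or_nonempty
  · simp [hT]
  set a := T.min' hT
  have mem_T {u : ℤ} : u ∈ T ↔ (t ≤ u ∧ u ≤ t + W - 2 + B) ∧ S u = true := by
    simp [T]
  have ha := mem_T.1 (T.min'_mem hT)
  let fold (u : ℤ) : ℤ := if u < a + W then u else u - (W - 1)
  calc #T ≤ #(Icc a (a + B - 1)) := by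
        refine card_le_card_of_injOn fold (fun u hu => ?_) fun u hu v hv huv => ?_
        · have hau := T.min'_le u hu
          obtain ⟨⟨-, hut⟩, hSu⟩ := mem_T.1 hu
          simp only [coe_Icc, Set.mem_Icc, fold]
          split_ifs with h
          · have := hS.lt_add_of_le ha.2 hSu hau (by omega)
            omega
          · omega
        · have hSu := (mem_T.1 hu).2
          have hSv := (mem_T.1 hv).2
          have := hS.ne_add_sub_one hBW hSu hSv
          have := hS.ne_add_sub_one hBW hSv hSu
          simp only [fold] at huv
          split_ifs at huv <;> omega
    _ = B := by simp [Int.card_Icc]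

end IsBursty

theorem bursty_split_count_general (B W : ℕ) (hBW : B < W)
    (S : ℤ → Bool)
    (hbursty : ∀ j u l : ℤ, u ∈ Set.Icc j (j + W - 1) → S u = true →
      l ∈ Set.Icc (u + B) (j + W - 1) → S l = false)
    (t : ℤ) (x' : ℕ)
    (hfirst : ((Finset.Icc t (t + W - 2)).filter (fun u => S u = true)).card = x') :
    ((Finset.Icc (t + W - 1) (t + W - 2 + B)).filter (fun u => S u = true)).card
      ≤ B - x' := by
  have hdisj : Disjoint (Icc t (t + W - 2)) (Icc (t + W - 1) (t + W - 2 + B)) :=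
    disjoint_left.2 fun u hu hu' => by simp only [mem_Icc] at hu hu'; omega
  have hunion : Icc t (t + W - 2) ∪ Icc (t + W - 1) (t + W - 2 + B) = Icc t (t + W - 2 + B) := by
    ext u; simp only [mem_union, mem_Icc]; omega
  have hcount := IsBursty.card_filter_Icc_le hbursty hBW t
  rw [← hunion, filter_union, card_union_of_disjoint (disjoint_filter_filter hdisj), hfirst]
    at hcount
  omega

/-- Bursty model: `x'` straggling rounds in `[t, t+W-2]` leave at most `B - x'`
straggling rounds in `[t+W-1, t+W-2+B]`. -/
theorem bursty_split_count (B W : ℕ) (hB : 0 < B) (hBW : B < W)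
    (S : ℤ → Bool)
    (hbursty : ∀ j u l : ℤ, u ∈ Set.Icc j (j + W - 1) → S u = true →
      l ∈ Set.Icc (u + B) (j + W - 1) → S l = false)
    (t : ℤ) (x' : ℕ) (hx1 : 1 ≤ x') (hxB : x' ≤ B)
    (hfirst : ((Finset.Icc t (t + W - 2)).filter (fun u => S u = true)).card = x') :
    ((Finset.Icc (t + W - 1) (t + W - 2 + B)).filter (fun u => S u = true)).card
      ≤ B - x' :=
  bursty_split_count_general B W hBW S hbursty t x' hfirst
end
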